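/- For all z in [0, √2], 2Φ(z) - 1 - z(1+z²)(2+z²)φ(z) ≤ 0, where Φ and φ are the standard normal CDF and PDF. -/

import Mathlib

/-! The function `h z = 2 Φ(z) - 1 - z (1 + z²) (2 + z²) φ(z)` vanishes at `0` because `Φ(0) = 1/2`
by the symmetry of `φ`, and, using `Φ' = φ` and `φ'(z) = -z φ(z)`, its derivative is
`z² (z⁴ - 2 z² - 7) φ(z)`, which is nonpositive on `[0, √2]` since there `z⁴ - 2 z² - 7 ≤ 4 - 7`.
Hence `h` is antitone on `[0, √2]`, so `h z ≤ h 0 = 0`. -/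

open Real Set Filter Topology

noncomputable def phi (y : ℝ) : ℝ := (Real.sqrt (2 * Real.pi))⁻¹ * Real.exp (-y ^ 2 / 2)

noncomputable def Phi (x : ℝ) : ℝ := ∫ y in Set.Iic x, phi y

noncomputable def PhiInv (a : ℝ) : ℝ := Function.invFun Phi a

open MeasureTheory ProbabilityTheory

section IntegralIic

variable {E : Type*} [NormedAddCommGroup E] [NormedSpace ℝ E] {f : ℝ → E}

theorem hasDerivAt_setIntegral_Iic [CompleteSpace E] (hf : Integrable f) {x : ℝ}
    (hx : ContinuousAt f x) :
    HasDerivAt (fun t => ∫ y in Iic t, f y) (f x) x := by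
  have hFTC := (intervalIntegral.integral_hasDerivAt_right (a := 0) hf.intervalIntegrable
    hf.aestronglyMeasurable.stronglyMeasurableAtFilter hx).const_add (∫ y in Iic 0, f y)
  refine hFTC.congr_of_eventuallyEq (Eventually.of_forall fun t => ?_)
  dsimp only
  rw [← intervalIntegral.integral_Iic_sub_Iic hf.integrableOn hf.integrableOn, add_sub_cancel]

theorem setIntegral_Iic_zero_of_even (hf : Integrable f) (heven : ∀ x, f (-x) = f x) :
    ∫ y in Iic 0, f y = (2 : ℝ)⁻¹ • ∫ y, f y := by
  have hsymm : ∫ y in Iic 0, f y = ∫ y in Ioi 0, f y := by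
    simpa [heven] using integral_comp_neg_Iic (0 : ℝ) f
  rw [← intervalIntegral.integral_Iic_add_Ioi hf.integrableOn hf.integrableOn, ← hsymm,
    ← two_smul ℝ, smul_smul]
  norm_num

end IntegralIic

theorem phi_eq_gaussianPDFReal : phi = gaussianPDFReal 0 1 := by
  ext x
  simp [phi, gaussianPDFReal]

theorem phi_pos (x : ℝ) : 0 < phi x := by
  rw [phi_eq_gaussianPDFReal]
  exact gaussianPDFReal_pos _ _ _ one_ne_zero

theorem phi_neg (x : ℝ) : phi (-x) = phi x := by
  simp [phi]

theorem integrable_phi : Integrable phi :=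
  phi_eq_gaussianPDFReal ▸ integrable_gaussianPDFReal 0 1

theorem continuous_phi : Continuous phi := by
  unfold phi
  fun_prop

theorem hasDerivAt_phi (x : ℝ) : HasDerivAt phi (-x * phi x) x := by
  have hexp : HasDerivAt (fun y : ℝ => -y ^ 2 / 2) (-x) x :=
    ((hasDerivAt_pow 2 x).neg.div_const 2).congr_deriv (by ring)
  refine (hexp.exp.const_mul (√(2 * π))⁻¹).congr_deriv ?_
  simp only [phi]
  ring

theorem hasDerivAt_Phi (x : ℝ) : HasDerivAt Phi (phi x) x :=
  hasDerivAt_setIntegral_Iic integrable_phi continuous_phi.continuousAt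

theorem Phi_zero : Phi 0 = 1 / 2 := by
  rw [Phi, setIntegral_Iic_zero_of_even integrable_phi phi_neg, phi_eq_gaussianPDFReal,
    integral_gaussianPDFReal_eq_one 0 one_ne_zero]
  norm_num

theorem hasDerivAt_two_mul_Phi_sub_one_sub (x : ℝ) :
    HasDerivAt (fun z => 2 * Phi z - 1 - z * (1 + z ^ 2) * (2 + z ^ 2) * phi z)
      (x ^ 2 * (x ^ 4 - 2 * x ^ 2 - 7) * phi x) x := by
  have hpoly : HasDerivAt (fun z : ℝ => z * (1 + z ^ 2) * (2 + z ^ 2))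
      (5 * x ^ 4 + 9 * x ^ 2 + 2) x := by
    refine (((hasDerivAt_id x).mul ((hasDerivAt_const x 1).add (hasDerivAt_pow 2 x))).mul
      ((hasDerivAt_const x 2).add (hasDerivAt_pow 2 x))).congr_deriv ?_
    norm_num
    ring
  refine ((((hasDerivAt_Phi x).const_mul 2).sub_const 1).sub
    (hpoly.mul (hasDerivAt_phi x))).congr_deriv ?_
  ring

theorem h_nonpos (z : ℝ) (hz : z ∈ Set.Icc (0 : ℝ) (Real.sqrt 2)) :
    2 * Phi z - 1 - z * (1 + z ^ 2) * (2 + z ^ 2) * phi z ≤ 0 := by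
  have hanti : AntitoneOn (fun z => 2 * Phi z - 1 - z * (1 + z ^ 2) * (2 + z ^ 2) * phi z)
      (Icc 0 √2) := by
    refine antitoneOn_of_hasDerivWithinAt_nonpos (convex_Icc _ _)
      (fun x _ => (hasDerivAt_two_mul_Phi_sub_one_sub x).continuousAt.continuousWithinAt)
      (fun x _ => (hasDerivAt_two_mul_Phi_sub_one_sub x).hasDerivWithinAt) fun x hx => ?_
    rw [interior_Icc] at hx
    have hx2 : x ^ 2 ≤ 2 := by
      simpa using pow_le_pow_left₀ hx.1.le hx.2.le 2
    have hquartic : x ^ 4 - 2 * x ^ 2 - 7 ≤ 0 := by nlinarith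
    exact mul_nonpos_of_nonpos_of_nonneg (mul_nonpos_of_nonneg_of_nonpos (sq_nonneg x) hquartic)
      (phi_pos x).le
  simpa [Phi_zero] using hanti (left_mem_Icc.2 (sqrt_nonneg 2)) hz hz.1
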